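/- arXiv:2107.06285 — 3 statements merged into one kernel-verified Lean document; each statement's English description precedes it below -/
import Mathlib

section
/- Lieb's concavity theorem for T-product tensors: let H be a Hermitian matrix (bcirc of a Hermitian T-product tensor). Then the map A ↦ tr(exp(H + log A)) is concave on positive definite Hermitian matrices: for t ∈ [0,1] and positive definite A₁, A₂, tr(exp(H + log(tA₁ + (1-t)A₂))) ≥ t·tr(exp(H + log A₁)) + (1-t)·tr(exp(H + log A₂)). -/
/-!
Tropp's proof. Write `D(X‖A) = tr X log X - tr X log A`. By Klein's inequality
`tr X - tr Y ≤ D(X‖Y)`, applied with `Y = exp (H + log A)`, every `X > 0` satisfies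
`tr XH - D(X‖A) + tr X ≤ tr exp (H + log A)`, with equality at `X = exp (H + log A)`. Hence
if `X₁, X₂` are the maximisers for `A₁, A₂`, testing with `t X₁ + (1 - t) X₂` and using the
joint convexity of `D` gives the concavity.

Joint convexity of `D` comes from `x log x - x log a = ∫₀^∞ (x/(1+s) - x a/(x + s a)) ds`: in the
eigenbases of `X` and `A`, `D(X‖A)` becomes the integral of `tr X/(1+s)` minus a trace functional
of the scalar parallel sum `(x, b) ↦ x b/(x + b)` at `(X, s A)`, and that functional is an
infimum of functions linear in the pair of matrices, hence jointly concave.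
-/

open Matrix Real Filter Topology MeasureTheory Set Unitary
open scoped ComplexOrder MatrixOrder

theorem Real.mul_log_sub_mul_log_le {x y : ℝ} (hx : 0 < x) (hy : 0 < y) :
    x * log y - x * log x ≤ y - x := by
  have h := mul_le_mul_of_nonneg_left (log_le_sub_one_of_pos (div_pos hy hx)) hx.le
  rwa [log_div hy.ne' hx.ne', mul_sub, mul_sub, mul_div_cancel₀ _ hx.ne', mul_one] at h

namespace Complex

theorem mul_div_add_mul_normSq_le {p q : ℝ} (hp : 0 < p) (hq : 0 < q) (c w : ℂ) :
    p * q / (p + q) * normSq c ≤ p * normSq w + q * normSq (c - w) := by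
  rw [div_mul_eq_mul_div, div_le_iff₀ (by positivity)]
  simp only [normSq_apply, sub_re, sub_im]
  nlinarith [sq_nonneg ((p + q) * w.re - q * c.re), sq_nonneg ((p + q) * w.im - q * c.im)]

theorem mul_normSq_add_mul_normSq_sub_eq {p q : ℝ} (hp : 0 < p) (hq : 0 < q) (c : ℂ) :
    p * normSq (↑(q / (p + q)) * c) + q * normSq (c - ↑(q / (p + q)) * c) =
      p * q / (p + q) * normSq c := by
  have hc : c - ↑(q / (p + q)) * c = ↑(p / (p + q)) * c := by
    push_cast
    field_simp
    ring
  rw [hc, normSq_mul, normSq_mul, normSq_ofReal, normSq_ofReal]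
  field_simp
  ring

end Complex

/-- From `log y = ∫₀^∞ (1/(1+s) - 1/(y+s)) ds` at `y = x / a`, multiplied by `x`. -/
noncomputable def relEntropyKernel (x a s : ℝ) : ℝ := x / (1 + s) - x * a / (x + s * a)

section RelEntropyKernel

variable {x a : ℝ}

theorem relEntropyKernel_eq (hx : 0 < x) (ha : 0 < a) {s : ℝ} (hs : 0 ≤ s) :
    relEntropyKernel x a s = x * (x - a) / ((1 + s) * (x + s * a)) := by
  have : 0 < x + s * a := by positivity
  unfold relEntropyKernel
  field_simp
  ring

theorem hasDerivAt_relEntropyKernel_primitive (hx : 0 < x) (ha : 0 < a) {s : ℝ} (hs : 0 ≤ s) :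
    HasDerivAt (fun s => x * log (1 + s) - x * log (x + s * a)) (relEntropyKernel x a s) s := by
  have h₁ : HasDerivAt (fun s : ℝ => 1 + s) 1 s := (hasDerivAt_id s).const_add 1
  have h₂ : HasDerivAt (fun s : ℝ => x + s * a) a s := by
    simpa using ((hasDerivAt_id s).mul_const a).const_add x
  refine (((h₁.log (by positivity)).const_mul x).sub
    ((h₂.log (by positivity)).const_mul x)).congr_deriv ?_
  unfold relEntropyKernel
  ring

theorem tendsto_relEntropyKernel_primitive (hx : 0 < x) (ha : 0 < a) :
    Tendsto (fun s => x * log (1 + s) - x * log (x + s * a)) atTop (𝓝 (-(x * log a))) := by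
  have hden : Tendsto (fun s : ℝ => x + s * a) atTop atTop :=
    tendsto_atTop_add_const_left _ x (tendsto_id.atTop_mul_const ha)
  have hratio : Tendsto (fun s : ℝ => a⁻¹ + (1 - x / a) / (x + s * a)) atTop (𝓝 a⁻¹) := by
    simpa using tendsto_const_nhds.add (tendsto_const_nhds.div_atTop hden)
  have hlog := ((continuousAt_log (inv_ne_zero ha.ne')).tendsto.comp hratio).const_mul x
  rw [log_inv, mul_neg] at hlog
  refine hlog.congr' ?_
  filter_upwards [eventually_ge_atTop 0] with s hs
  have hd : 0 < x + s * a := by positivity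
  have hr : a⁻¹ + (1 - x / a) / (x + s * a) = (1 + s) / (x + s * a) := by
    field_simp
    ring
  simp only [Function.comp_apply, hr, log_div (by positivity : (1 + s) ≠ 0) hd.ne', mul_sub]

theorem integrableOn_relEntropyKernel (hx : 0 < x) (ha : 0 < a) :
    IntegrableOn (relEntropyKernel x a) (Ioi 0) := by
  have hderiv := fun s (hs : s ∈ Ici (0 : ℝ)) => hasDerivAt_relEntropyKernel_primitive hx ha hs
  have hlim := tendsto_relEntropyKernel_primitive hx ha
  rcases le_total a x with hax | hxa
  · refine integrableOn_Ioi_deriv_of_nonneg' hderiv (fun s (hs : 0 < s) => ?_) hlim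
    rw [relEntropyKernel_eq hx ha hs.le]
    exact div_nonneg (mul_nonneg hx.le (sub_nonneg.2 hax)) (by positivity)
  · refine integrableOn_Ioi_deriv_of_nonpos' hderiv (fun s (hs : 0 < s) => ?_) hlim
    rw [relEntropyKernel_eq hx ha hs.le]
    exact div_nonpos_of_nonpos_of_nonneg
      (mul_nonpos_of_nonneg_of_nonpos hx.le (sub_nonpos.2 hxa)) (by positivity)

theorem integral_relEntropyKernel (hx : 0 < x) (ha : 0 < a) :
    ∫ s in Ioi 0, relEntropyKernel x a s = x * log x - x * log a := by
  rw [integral_Ioi_of_hasDerivAt_of_tendsto'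
    (fun s hs => hasDerivAt_relEntropyKernel_primitive hx ha hs)
    (integrableOn_relEntropyKernel hx ha) (tendsto_relEntropyKernel_primitive hx ha)]
  simp
  ring

end RelEntropyKernel

namespace Matrix

variable {n : Type*}

theorem convex_posDef : Convex ℝ {X : Matrix n n ℂ | X.PosDef} := by
  intro X hX Y hY a b ha hb hab
  rcases ha.eq_or_lt with rfl | ha
  · simpa [show b = 1 by linarith] using hY
  · exact (hX.smul ha).add_posSemidef (hY.posSemidef.smul hb)

variable [Fintype n]

theorem re_trace_smul_add_smul (a b : ℝ) (X Y : Matrix n n ℂ) :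
    (a • X + b • Y).trace.re = a * X.trace.re + b * Y.trace.re := by
  simp [trace_add, trace_smul]

/-- For unitary `U`, `V` this is `Σᵢⱼ |⟨uᵢ, vⱼ⟩|² φ(xᵢ, aⱼ)`, the trace functional of `φ` at the
pair `U diag x U⋆`, `V diag a V⋆`: e.g. `tr (f X * g A)` for `φ x a = f x * g a`. -/
noncomputable def spectralPairing (φ : ℝ → ℝ → ℝ) (U V : Matrix n n ℂ) (x a : n → ℝ) : ℝ :=
  ∑ i, ∑ j, Complex.normSq ((star U * V) i j) * φ (x i) (a j)

section SpectralPairing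

variable {U V : Matrix n n ℂ} {x a : n → ℝ}

theorem spectralPairing_sub (φ ψ : ℝ → ℝ → ℝ) :
    spectralPairing (fun x a => φ x a - ψ x a) U V x a =
      spectralPairing φ U V x a - spectralPairing ψ U V x a := by
  simp only [spectralPairing, mul_sub, Finset.sum_sub_distrib]

theorem spectralPairing_nonneg {φ : ℝ → ℝ → ℝ} (h : ∀ i j, 0 ≤ φ (x i) (a j)) :
    0 ≤ spectralPairing φ U V x a :=
  Finset.sum_nonneg fun i _ => Finset.sum_nonneg fun j _ =>
    mul_nonneg (Complex.normSq_nonneg _) (h i j)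

variable [DecidableEq n]

theorem normSq_mem_doublyStochastic {W : Matrix n n ℂ} (hW : W ∈ unitaryGroup n ℂ) :
    of (fun i j => Complex.normSq (W i j)) ∈ doublyStochastic ℝ n := by
  have hrow : ∀ {W : Matrix n n ℂ}, W ∈ unitaryGroup n ℂ →
      ∀ i, ∑ j, Complex.normSq (W i j) = 1 := by
    intro W hW i
    have := congr_arg Complex.re (congr_fun₂ (mem_unitaryGroup_iff.1 hW) i i)
    simpa [mul_apply, Complex.mul_conj, ← Complex.normSq_eq_conj_mul_self] using this
  refine mem_doublyStochastic_iff_sum.2 ⟨fun i j => Complex.normSq_nonneg _, hrow hW, fun j => ?_⟩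
  simpa using hrow (star_mem hW) j

theorem spectralPairing_left (hU : U ∈ unitaryGroup n ℂ) (hV : V ∈ unitaryGroup n ℂ)
    (f : ℝ → ℝ) : spectralPairing (fun x _ => f x) U V x a = ∑ i, f (x i) := by
  refine Finset.sum_congr rfl fun i _ => ?_
  have h := sum_row_of_mem_doublyStochastic
    (normSq_mem_doublyStochastic (mul_mem (star_mem hU) hV)) i
  simp only [of_apply] at h
  rw [← Finset.sum_mul, h, one_mul]

theorem spectralPairing_right (hU : U ∈ unitaryGroup n ℂ) (hV : V ∈ unitaryGroup n ℂ)
    (g : ℝ → ℝ) : spectralPairing (fun _ a => g a) U V x a = ∑ j, g (a j) := by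
  rw [spectralPairing, Finset.sum_comm]
  refine Finset.sum_congr rfl fun j _ => ?_
  have h := sum_col_of_mem_doublyStochastic
    (normSq_mem_doublyStochastic (mul_mem (star_mem hU) hV)) j
  simp only [of_apply] at h
  rw [← Finset.sum_mul, h, one_mul]

end SpectralPairing

variable [DecidableEq n]

theorem trace_diagonal_mul_mul_diagonal_mul_conjTranspose (x a : n → ℝ) (P : Matrix n n ℂ) :
    (diagonal (RCLike.ofReal ∘ x) * P * diagonal (RCLike.ofReal ∘ a) * Pᴴ).trace =
      ((∑ i, ∑ j, Complex.normSq (P i j) * (x i * a j) : ℝ) : ℂ) := by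
  rw [trace, Complex.ofReal_sum]
  refine Finset.sum_congr rfl fun i _ => ?_
  rw [diag_apply, mul_apply, Complex.ofReal_sum]
  refine Finset.sum_congr rfl fun j _ => ?_
  rw [mul_diagonal, diagonal_mul, conjTranspose_apply, Complex.star_def, Complex.ofReal_mul,
    Complex.normSq_eq_conj_mul_self]
  simp only [Function.comp_apply, Complex.coe_algebraMap]
  push_cast
  ring

theorem trace_diagonal_mul_mul_conjTranspose (x : n → ℝ) (P : Matrix n n ℂ) :
    (diagonal (RCLike.ofReal ∘ x) * P * Pᴴ).trace =
      ((∑ i, ∑ j, Complex.normSq (P i j) * x i : ℝ) : ℂ) := by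
  simpa using trace_diagonal_mul_mul_diagonal_mul_conjTranspose x 1 P

theorem trace_diagonal_mul_conjTranspose_mul (x : n → ℝ) (P : Matrix n n ℂ) :
    (diagonal (RCLike.ofReal ∘ x) * Pᴴ * P).trace =
      ((∑ i, ∑ j, Complex.normSq (P i j) * x j : ℝ) : ℂ) := by
  have h := trace_diagonal_mul_mul_conjTranspose x Pᴴ
  rw [conjTranspose_conjTranspose, Finset.sum_comm] at h
  simpa [conjTranspose_apply, Complex.normSq_conj] using h

theorem trace_unitary_conj_diagonal {U : Matrix n n ℂ} (hU : U ∈ unitaryGroup n ℂ) (x : n → ℝ) :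
    (U * diagonal (RCLike.ofReal ∘ x) * star U).trace = ∑ i, (x i : ℂ) := by
  rw [trace_mul_cycle, star_mul_self_of_mem hU, one_mul, trace_diagonal]
  rfl

theorem trace_conj_diagonal_mul_conj_diagonal (U V : Matrix n n ℂ) (x a : n → ℝ) :
    (U * diagonal (RCLike.ofReal ∘ x) * star U *
        (V * diagonal (RCLike.ofReal ∘ a) * star V)).trace =
      (spectralPairing (· * ·) U V x a : ℂ) := by
  rw [spectralPairing, ← trace_diagonal_mul_mul_diagonal_mul_conjTranspose, mul_assoc, mul_assoc,
    trace_mul_comm]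
  simp only [← star_eq_conjTranspose, star_mul, star_star, mul_assoc]

theorem trace_conjTranspose_mul_conj_diagonal_mul {U V : Matrix n n ℂ}
    (hV : V ∈ unitaryGroup n ℂ) (x : n → ℝ) (M : Matrix n n ℂ) :
    (Mᴴ * (U * diagonal (RCLike.ofReal ∘ x) * star U) * M).trace =
      ((∑ i, ∑ j, Complex.normSq ((star U * M * V) i j) * x i : ℝ) : ℂ) := by
  have hV' : ∀ Y : Matrix n n ℂ, V * (star V * Y) = Y := fun Y => by
    rw [← mul_assoc, mul_star_self_of_mem hV, one_mul]
  rw [← trace_diagonal_mul_mul_conjTranspose]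
  calc (Mᴴ * (U * diagonal (RCLike.ofReal ∘ x) * star U) * M).trace
      = (Mᴴ * U * (diagonal (RCLike.ofReal ∘ x) * (star U * M))).trace := by
        simp only [mul_assoc]
    _ = (diagonal (RCLike.ofReal ∘ x) * (star U * M) * (Mᴴ * U)).trace := trace_mul_comm _ _
    _ = _ := by simp only [← star_eq_conjTranspose, star_mul, star_star, mul_assoc, hV']

theorem trace_mul_conj_diagonal_mul_conjTranspose {U V : Matrix n n ℂ}
    (hU : U ∈ unitaryGroup n ℂ) (b : n → ℝ) (M : Matrix n n ℂ) :
    (M * (V * diagonal (RCLike.ofReal ∘ b) * star V) * Mᴴ).trace =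
      ((∑ i, ∑ j, Complex.normSq ((star U * M * V) i j) * b j : ℝ) : ℂ) := by
  have hU' : ∀ Y : Matrix n n ℂ, U * (star U * Y) = Y := fun Y => by
    rw [← mul_assoc, mul_star_self_of_mem hU, one_mul]
  rw [← trace_diagonal_mul_conjTranspose_mul]
  calc (M * (V * diagonal (RCLike.ofReal ∘ b) * star V) * Mᴴ).trace
      = (M * V * (diagonal (RCLike.ofReal ∘ b) * (star V * Mᴴ))).trace := by
        simp only [mul_assoc]
    _ = (diagonal (RCLike.ofReal ∘ b) * (star V * Mᴴ) * (M * V)).trace := trace_mul_comm _ _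
    _ = _ := by simp only [← star_eq_conjTranspose, star_mul, star_star, mul_assoc, hU']

theorem IsHermitian.eq_conj_diagonal {X : Matrix n n ℂ} (hX : X.IsHermitian) :
    X = (hX.eigenvectorUnitary : Matrix n n ℂ) * diagonal (RCLike.ofReal ∘ hX.eigenvalues) *
      star (hX.eigenvectorUnitary : Matrix n n ℂ) := by
  conv_lhs => rw [hX.spectral_theorem, conjStarAlgAut_apply]

theorem IsHermitian.cfc_eq_conj_diagonal {X : Matrix n n ℂ} (hX : X.IsHermitian) (f : ℝ → ℝ) :
    cfc f X = (hX.eigenvectorUnitary : Matrix n n ℂ) *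
      diagonal (RCLike.ofReal ∘ f ∘ hX.eigenvalues) *
        star (hX.eigenvectorUnitary : Matrix n n ℂ) := by
  rw [hX.cfc_eq, IsHermitian.cfc, conjStarAlgAut_apply]

theorem IsHermitian.re_trace_cfc {X : Matrix n n ℂ} (hX : X.IsHermitian) (f : ℝ → ℝ) :
    (cfc f X).trace.re = ∑ i, f (hX.eigenvalues i) := by
  rw [hX.cfc_eq_conj_diagonal, trace_unitary_conj_diagonal hX.eigenvectorUnitary.2]
  simp

theorem IsHermitian.re_trace_cfc_mul_cfc {X A : Matrix n n ℂ} (hX : X.IsHermitian)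
    (hA : A.IsHermitian) (f g : ℝ → ℝ) :
    (cfc f X * cfc g A).trace.re =
      spectralPairing (fun x a => f x * g a) hX.eigenvectorUnitary hA.eigenvectorUnitary
        hX.eigenvalues hA.eigenvalues := by
  rw [hX.cfc_eq_conj_diagonal, hA.cfc_eq_conj_diagonal, trace_conj_diagonal_mul_conj_diagonal,
    Complex.ofReal_re]
  rfl

noncomputable def parallelSumObjective (X B M : Matrix n n ℂ) : ℝ :=
  ((Mᴴ * X * M).trace + ((1 - M) * B * (1 - M)ᴴ).trace).re

/-- In the eigenbases `uᵢ`, `vⱼ` of `X`, `B > 0` this is `Σᵢⱼ |⟨uᵢ, vⱼ⟩|² xᵢ bⱼ / (xᵢ + bⱼ)`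
(`parallelSumTrace_conj_diagonal`), which is not the trace of the operator parallel sum
`(X⁻¹ + B⁻¹)⁻¹` unless `X` and `B` commute. -/
noncomputable def parallelSumTrace (X B : Matrix n n ℂ) : ℝ :=
  ⨅ M, parallelSumObjective X B M

theorem parallelSumObjective_conj_diagonal {U V : Matrix n n ℂ} (hU : U ∈ unitaryGroup n ℂ)
    (hV : V ∈ unitaryGroup n ℂ) (x b : n → ℝ) (M : Matrix n n ℂ) :
    parallelSumObjective (U * diagonal (RCLike.ofReal ∘ x) * star U)
        (V * diagonal (RCLike.ofReal ∘ b) * star V) M =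
      ∑ i, ∑ j, (x i * Complex.normSq ((star U * M * V) i j) +
        b j * Complex.normSq ((star U * V) i j - (star U * M * V) i j)) := by
  rw [parallelSumObjective, trace_conjTranspose_mul_conj_diagonal_mul hV,
    trace_mul_conj_diagonal_mul_conjTranspose hU, ← Complex.ofReal_add, Complex.ofReal_re,
    ← Finset.sum_add_distrib]
  refine Finset.sum_congr rfl fun i _ => ?_
  rw [← Finset.sum_add_distrib]
  refine Finset.sum_congr rfl fun j _ => ?_
  rw [mul_sub, mul_one, sub_mul, sub_apply]
  ring

theorem isLeast_parallelSumObjective_conj_diagonal {U V : Matrix n n ℂ}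
    (hU : U ∈ unitaryGroup n ℂ) (hV : V ∈ unitaryGroup n ℂ) {x b : n → ℝ} (hx : ∀ i, 0 < x i)
    (hb : ∀ j, 0 < b j) :
    IsLeast (range (parallelSumObjective (U * diagonal (RCLike.ofReal ∘ x) * star U)
        (V * diagonal (RCLike.ofReal ∘ b) * star V)))
      (spectralPairing (fun x b => x * b / (x + b)) U V x b) := by
  refine ⟨?_, ?_⟩
  · -- the pointwise minimisers `wᵢⱼ = bⱼ cᵢⱼ / (xᵢ + bⱼ)` of `Complex.mul_div_add_mul_normSq_le`
    let N : Matrix n n ℂ := of fun i j => ((b j / (x i + b j) : ℝ) : ℂ) * (star U * V) i j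
    refine ⟨U * N * star V, ?_⟩
    have hN : star U * (U * N * star V) * V = N := by
      rw [← mul_assoc, ← mul_assoc, star_mul_self_of_mem hU, one_mul, mul_assoc,
        star_mul_self_of_mem hV, mul_one]
    simp only [parallelSumObjective_conj_diagonal hU hV, hN, spectralPairing]
    refine Finset.sum_congr rfl fun i _ => Finset.sum_congr rfl fun j _ => ?_
    simp only [N, of_apply]
    rw [Complex.mul_normSq_add_mul_normSq_sub_eq (hx i) (hb j)]
    ring
  · rintro _ ⟨M, rfl⟩
    simp only [parallelSumObjective_conj_diagonal hU hV, spectralPairing]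
    refine Finset.sum_le_sum fun i _ => Finset.sum_le_sum fun j _ => ?_
    rw [mul_comm]
    exact Complex.mul_div_add_mul_normSq_le (hx i) (hb j) _ _

theorem parallelSumTrace_conj_diagonal {U V : Matrix n n ℂ} (hU : U ∈ unitaryGroup n ℂ)
    (hV : V ∈ unitaryGroup n ℂ) {x b : n → ℝ} (hx : ∀ i, 0 < x i) (hb : ∀ j, 0 < b j) :
    parallelSumTrace (U * diagonal (RCLike.ofReal ∘ x) * star U)
        (V * diagonal (RCLike.ofReal ∘ b) * star V) =
      spectralPairing (fun x b => x * b / (x + b)) U V x b :=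
  (isLeast_parallelSumObjective_conj_diagonal hU hV hx hb).csInf_eq

theorem bddBelow_parallelSumObjective {X B : Matrix n n ℂ} (hX : X.PosDef) (hB : B.PosDef) :
    BddBelow (range (parallelSumObjective X B)) := by
  have h := isLeast_parallelSumObjective_conj_diagonal hX.1.eigenvectorUnitary.2
    hB.1.eigenvectorUnitary.2 hX.eigenvalues_pos hB.eigenvalues_pos
  rw [← hX.1.eq_conj_diagonal, ← hB.1.eq_conj_diagonal] at h
  exact h.bddBelow

theorem parallelSumObjective_smul_add_smul (a b : ℝ) (X₁ X₂ B₁ B₂ M : Matrix n n ℂ) :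
    parallelSumObjective (a • X₁ + b • X₂) (a • B₁ + b • B₂) M =
      a * parallelSumObjective X₁ B₁ M + b * parallelSumObjective X₂ B₂ M := by
  simp only [parallelSumObjective, Matrix.mul_add, Matrix.add_mul, Matrix.mul_smul,
    Matrix.smul_mul, trace_add, trace_smul, Complex.add_re, Complex.real_smul,
    Complex.re_ofReal_mul]
  ring

theorem le_parallelSumTrace_smul_add_smul {X₁ X₂ B₁ B₂ : Matrix n n ℂ} (hX₁ : X₁.PosDef)
    (hB₁ : B₁.PosDef) (hX₂ : X₂.PosDef) (hB₂ : B₂.PosDef) {a b : ℝ} (ha : 0 ≤ a) (hb : 0 ≤ b) :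
    a * parallelSumTrace X₁ B₁ + b * parallelSumTrace X₂ B₂ ≤
      parallelSumTrace (a • X₁ + b • X₂) (a • B₁ + b • B₂) :=
  le_ciInf fun M => by
    rw [parallelSumObjective_smul_add_smul]
    exact add_le_add
      (mul_le_mul_of_nonneg_left (ciInf_le (bddBelow_parallelSumObjective hX₁ hB₁) M) ha)
      (mul_le_mul_of_nonneg_left (ciInf_le (bddBelow_parallelSumObjective hX₂ hB₂) M) hb)

noncomputable def relEntropy (X A : Matrix n n ℂ) : ℝ :=
  (X * cfc log X).trace.re - (X * cfc log A).trace.re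

theorem relEntropy_eq_spectralPairing {X A : Matrix n n ℂ} (hX : X.IsHermitian)
    (hA : A.IsHermitian) :
    relEntropy X A = spectralPairing (fun x a => x * log x - x * log a) hX.eigenvectorUnitary
      hA.eigenvectorUnitary hX.eigenvalues hA.eigenvalues := by
  have hXX : X * cfc log X = cfc (fun x => x * log x) X := by
    rw [cfc_mul (fun x : ℝ => x) log X continuousOn_id
      ((spectrum ℝ X).toFinite.continuousOn log), cfc_id' ℝ X]
  have hXA : X * cfc log A = cfc (fun x : ℝ => x) X * cfc log A := by rw [cfc_id' ℝ X]
  rw [relEntropy, hXX, hXA, hX.re_trace_cfc (fun x => x * log x), hX.re_trace_cfc_mul_cfc hA,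
    spectralPairing_sub, spectralPairing_left hX.eigenvectorUnitary.2 hA.eigenvectorUnitary.2]

theorem sub_le_relEntropy {X Y : Matrix n n ℂ} (hX : X.PosDef) (hY : Y.PosDef) :
    X.trace.re - Y.trace.re ≤ relEntropy X Y := by
  have hU := hX.1.eigenvectorUnitary.2
  have hV := hY.1.eigenvectorUnitary.2
  have hXtr : X.trace.re = spectralPairing (fun x _ => x) hX.1.eigenvectorUnitary
      hY.1.eigenvectorUnitary hX.1.eigenvalues hY.1.eigenvalues := by
    rw [spectralPairing_left hU hV, hX.1.trace_eq_sum_eigenvalues]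
    simp
  have hYtr : Y.trace.re = spectralPairing (fun _ y => y) hX.1.eigenvectorUnitary
      hY.1.eigenvectorUnitary hX.1.eigenvalues hY.1.eigenvalues := by
    rw [spectralPairing_right hU hV, hY.1.trace_eq_sum_eigenvalues]
    simp
  rw [← sub_nonneg, relEntropy_eq_spectralPairing hX.1 hY.1, hXtr, hYtr, ← spectralPairing_sub,
    ← spectralPairing_sub]
  exact spectralPairing_nonneg fun i j => by
    linarith [Real.mul_log_sub_mul_log_le (hX.eigenvalues_pos i) (hY.eigenvalues_pos j)]

noncomputable def relEntropyIntegrand (X A : Matrix n n ℂ) (s : ℝ) : ℝ :=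
  X.trace.re / (1 + s) - parallelSumTrace X (s • A) / s

theorem relEntropyIntegrand_eq_spectralPairing {X A : Matrix n n ℂ} (hX : X.PosDef)
    (hA : A.PosDef) {s : ℝ} (hs : 0 < s) :
    relEntropyIntegrand X A s = spectralPairing (fun x a => relEntropyKernel x a s)
      hX.1.eigenvectorUnitary hA.1.eigenvectorUnitary hX.1.eigenvalues hA.1.eigenvalues := by
  have hK := parallelSumTrace_conj_diagonal hX.1.eigenvectorUnitary.2
    hA.1.eigenvectorUnitary.2 hX.eigenvalues_pos (fun j => mul_pos hs (hA.eigenvalues_pos j))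
  have hsA : s • A = (hA.1.eigenvectorUnitary : Matrix n n ℂ) *
      diagonal (RCLike.ofReal ∘ fun j => s * hA.1.eigenvalues j : n → ℂ) *
      star (hA.1.eigenvectorUnitary : Matrix n n ℂ) := by
    have hD : diagonal (RCLike.ofReal ∘ fun j => s * hA.1.eigenvalues j : n → ℂ) =
        s • diagonal (RCLike.ofReal ∘ hA.1.eigenvalues) := by
      ext i j
      by_cases h : i = j <;> simp [h]
    conv_lhs => rw [hA.1.eq_conj_diagonal]
    rw [hD, Matrix.mul_smul, Matrix.smul_mul]
  rw [← hX.1.eq_conj_diagonal, ← hsA] at hK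
  have hXtr : X.trace.re / (1 + s) = spectralPairing (fun x _ => x / (1 + s))
      hX.1.eigenvectorUnitary hA.1.eigenvectorUnitary hX.1.eigenvalues hA.1.eigenvalues := by
    rw [spectralPairing_left hX.1.eigenvectorUnitary.2 hA.1.eigenvectorUnitary.2,
      hX.1.trace_eq_sum_eigenvalues, ← Finset.sum_div]
    simp
  rw [relEntropyIntegrand, hK, hXtr]
  simp only [spectralPairing, relEntropyKernel, Finset.sum_div, ← Finset.sum_sub_distrib]
  refine Finset.sum_congr rfl fun i _ => Finset.sum_congr rfl fun j _ => ?_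
  have := hX.eigenvalues_pos i
  have := hA.eigenvalues_pos j
  field_simp

theorem integrableOn_relEntropyIntegrand {X A : Matrix n n ℂ} (hX : X.PosDef) (hA : A.PosDef) :
    IntegrableOn (relEntropyIntegrand X A) (Ioi 0) := by
  refine (integrableOn_congr_fun (fun s hs => relEntropyIntegrand_eq_spectralPairing hX hA hs)
    measurableSet_Ioi).2 ?_
  refine integrable_finsetSum _ fun i _ => integrable_finsetSum _ fun j _ => ?_
  exact (integrableOn_relEntropyKernel (hX.eigenvalues_pos i) (hA.eigenvalues_pos j)).const_mul _

theorem integral_relEntropyIntegrand {X A : Matrix n n ℂ} (hX : X.PosDef) (hA : A.PosDef) :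
    ∫ s in Ioi 0, relEntropyIntegrand X A s = relEntropy X A := by
  have hint : ∀ i j, IntegrableOn (fun s => Complex.normSq
      ((star (hX.1.eigenvectorUnitary : Matrix n n ℂ) * hA.1.eigenvectorUnitary) i j) *
        relEntropyKernel (hX.1.eigenvalues i) (hA.1.eigenvalues j) s) (Ioi 0) := fun i j =>
    (integrableOn_relEntropyKernel (hX.eigenvalues_pos i) (hA.eigenvalues_pos j)).const_mul _
  rw [setIntegral_congr_fun measurableSet_Ioi
      (fun s hs => relEntropyIntegrand_eq_spectralPairing hX hA hs),
    relEntropy_eq_spectralPairing hX.1 hA.1]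
  simp only [spectralPairing]
  rw [integral_finsetSum _ fun i _ => integrable_finsetSum _ fun j _ => hint i j]
  refine Finset.sum_congr rfl fun i _ => ?_
  rw [integral_finsetSum _ fun j _ => hint i j]
  refine Finset.sum_congr rfl fun j _ => ?_
  rw [integral_const_mul, integral_relEntropyKernel (hX.eigenvalues_pos i) (hA.eigenvalues_pos j)]

theorem relEntropyIntegrand_smul_add_smul_le {X₁ X₂ A₁ A₂ : Matrix n n ℂ} (hX₁ : X₁.PosDef)
    (hA₁ : A₁.PosDef) (hX₂ : X₂.PosDef) (hA₂ : A₂.PosDef) {a b : ℝ} (ha : 0 ≤ a) (hb : 0 ≤ b)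
    {s : ℝ} (hs : 0 < s) :
    relEntropyIntegrand (a • X₁ + b • X₂) (a • A₁ + b • A₂) s ≤
      a * relEntropyIntegrand X₁ A₁ s + b * relEntropyIntegrand X₂ A₂ s := by
  have hK := le_parallelSumTrace_smul_add_smul hX₁ (hA₁.smul hs) hX₂ (hA₂.smul hs) ha hb
  rw [smul_comm a s, smul_comm b s, ← smul_add] at hK
  have hK' := div_le_div_of_nonneg_right hK hs.le
  rw [add_div, mul_div_assoc, mul_div_assoc] at hK'
  simp only [relEntropyIntegrand, re_trace_smul_add_smul]
  rw [add_div, mul_div_assoc, mul_div_assoc]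
  linarith

theorem convexOn_relEntropy :
    ConvexOn ℝ ({X : Matrix n n ℂ | X.PosDef} ×ˢ {A | A.PosDef}) fun p => relEntropy p.1 p.2 := by
  refine ⟨convex_posDef.prod convex_posDef, ?_⟩
  rintro ⟨X₁, A₁⟩ ⟨hX₁, hA₁⟩ ⟨X₂, A₂⟩ ⟨hX₂, hA₂⟩ a b ha hb hab
  have hX := convex_posDef hX₁ hX₂ ha hb hab
  have hA := convex_posDef hA₁ hA₂ ha hb hab
  have hint₁ := (integrableOn_relEntropyIntegrand hX₁ hA₁).const_mul a
  have hint₂ := (integrableOn_relEntropyIntegrand hX₂ hA₂).const_mul b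
  simp only [Prod.smul_mk, Prod.mk_add_mk, smul_eq_mul]
  rw [← integral_relEntropyIntegrand hX hA, ← integral_relEntropyIntegrand hX₁ hA₁,
    ← integral_relEntropyIntegrand hX₂ hA₂, ← integral_const_mul, ← integral_const_mul,
    ← integral_add hint₁ hint₂]
  exact setIntegral_mono_on (integrableOn_relEntropyIntegrand hX hA) (hint₁.add hint₂)
    measurableSet_Ioi fun s hs => relEntropyIntegrand_smul_add_smul_le hX₁ hA₁ hX₂ hA₂ ha hb hs

theorem cfc_log_cfc_exp {M : Matrix n n ℂ} (hM : IsSelfAdjoint M) : cfc log (cfc exp M) = M := by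
  rw [← cfc_comp' log exp M (by fun_prop (disch := simp))]
  simp [cfc_id' ℝ M]

theorem posDef_cfc_exp {M : Matrix n n ℂ} (hM : IsSelfAdjoint M) : (cfc exp M).PosDef := by
  rw [← isStrictlyPositive_iff_posDef, cfc_isStrictlyPositive_iff exp M]
  exact fun x _ => exp_pos x

theorem relEntropy_cfc_exp_add_cfc_log {H : Matrix n n ℂ} (hH : H.IsHermitian)
    (A : Matrix n n ℂ) :
    relEntropy (cfc exp (H + cfc log A)) A = (cfc exp (H + cfc log A) * H).trace.re := by
  rw [relEntropy, cfc_log_cfc_exp (hH.isSelfAdjoint.add (cfc_predicate log A)), mul_add,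
    trace_add, Complex.add_re, add_sub_cancel_right]

theorem re_trace_mul_sub_relEntropy_add_re_trace_le {X H : Matrix n n ℂ} (hX : X.PosDef)
    (hH : H.IsHermitian) (A : Matrix n n ℂ) :
    (X * H).trace.re - relEntropy X A + X.trace.re ≤ (cfc exp (H + cfc log A)).trace.re := by
  have hHA : IsSelfAdjoint (H + cfc log A) := hH.isSelfAdjoint.add (cfc_predicate log A)
  have hklein := sub_le_relEntropy hX (posDef_cfc_exp hHA)
  rw [relEntropy, cfc_log_cfc_exp hHA, mul_add, trace_add, Complex.add_re] at hklein
  rw [relEntropy]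
  linarith

end Matrix

/-- Lieb's concavity theorem (at the `bcirc`-matrix level): for a fixed Hermitian
matrix `H`, the map `A ↦ tr (exp (H + log A))` is concave on positive definite
Hermitian matrices. -/
theorem lieb_concavity {n : ℕ} (H : Matrix (Fin n) (Fin n) ℂ) (hH : H.IsHermitian)
    (A₁ A₂ : Matrix (Fin n) (Fin n) ℂ) (hA₁ : A₁.PosDef) (hA₂ : A₂.PosDef)
    (t : ℝ) (ht : t ∈ Set.Icc (0:ℝ) 1) :
    t * ((cfc Real.exp (H + cfc Real.log A₁)).trace).re +
      (1 - t) * ((cfc Real.exp (H + cfc Real.log A₂)).trace).re ≤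
    ((cfc Real.exp (H + cfc Real.log (t • A₁ + (1 - t) • A₂))).trace).re := by
  obtain ⟨ht₀, ht₁⟩ := ht
  set X₁ := cfc Real.exp (H + cfc Real.log A₁)
  set X₂ := cfc Real.exp (H + cfc Real.log A₂)
  have hX₁ : X₁.PosDef := posDef_cfc_exp (hH.isSelfAdjoint.add (cfc_predicate _ _))
  have hX₂ : X₂.PosDef := posDef_cfc_exp (hH.isSelfAdjoint.add (cfc_predicate _ _))
  have hconv := convexOn_relEntropy.2 (x := (X₁, A₁)) (y := (X₂, A₂)) ⟨hX₁, hA₁⟩ ⟨hX₂, hA₂⟩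
    ht₀ (sub_nonneg.2 ht₁) (add_sub_cancel t 1)
  simp only [Prod.smul_mk, Prod.mk_add_mk, smul_eq_mul] at hconv
  rw [relEntropy_cfc_exp_add_cfc_log hH, relEntropy_cfc_exp_add_cfc_log hH] at hconv
  have hgibbs := re_trace_mul_sub_relEntropy_add_re_trace_le
    (convex_posDef hX₁ hX₂ ht₀ (sub_nonneg.2 ht₁) (add_sub_cancel t 1)) hH (t • A₁ + (1 - t) • A₂)
  rw [Matrix.add_mul, Matrix.smul_mul, Matrix.smul_mul, re_trace_smul_add_smul,
    re_trace_smul_add_smul] at hgibbs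
  linarith
end

section
/- Variational formula for the trace exponential (used to prove Lieb's theorem): for a Hermitian matrix H and positive definite matrix A of the same size, tr(exp(H + log A)) = max over positive definite X of { tr(X H) - D(X‖A) + tr(X) }, where D(X‖A) = tr(X(log X - log A)) is the quantum relative entropy. -/
open Matrix
open scoped ComplexOrder MatrixOrder

/-!
If `X = ∑ λᵢ uᵢuᵢ*` and `M = ∑ μⱼ vⱼvⱼ*` are spectral decompositions, then
`tr (f X * g M) = ∑ᵢⱼ f λᵢ g μⱼ |⟨uᵢ, vⱼ⟩|²` for all real functions `f`, `g`. Writing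
`tr (X M) - tr (X log X) + tr X` and `tr (exp M)` in this form (with `f` or `g` constant `1`
where needed), Klein's inequality reduces termwise to the scalar inequality
`x y - x log x + x ≤ exp y` for `x ≥ 0`. For `M = H + log A` the objective is exactly
`tr (X M) - tr (X log X) + tr X`, and `X = exp M` attains the bound since `log (exp M) = M`.
-/

lemma Real.mul_sub_mul_log_add_le_exp {x : ℝ} (hx : 0 ≤ x) (y : ℝ) :
    x * y - x * Real.log x + x ≤ Real.exp y := by
  rcases hx.eq_or_lt with rfl | hx
  · simpa using (Real.exp_pos y).le
  have h := mul_le_mul_of_nonneg_left (Real.add_one_le_exp (y - Real.log x)) hx.le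
  rw [Real.exp_sub, Real.exp_log hx, mul_div_cancel₀ _ hx.ne'] at h
  linarith

namespace Matrix

variable {ι 𝕜 : Type*} [Fintype ι] [DecidableEq ι] [RCLike 𝕜]

lemma trace_diagonal_mul_mul_diagonal_mul_conjTranspose_s16 (d e : ι → 𝕜) (W : Matrix ι ι 𝕜) :
    (diagonal d * W * diagonal e * Wᴴ).trace = ∑ i, ∑ j, d i * e j * (‖W i j‖ ^ 2 : 𝕜) := by
  refine Finset.sum_congr rfl fun i _ => ?_
  rw [diag_apply, mul_apply]
  refine Finset.sum_congr rfl fun j _ => ?_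
  rw [mul_diagonal, diagonal_mul, conjTranspose_apply, RCLike.star_def, ← RCLike.mul_conj]
  ring

lemma IsHermitian.trace_cfc_mul_cfc {A B : Matrix ι ι 𝕜} (hA : A.IsHermitian)
    (hB : B.IsHermitian) (f g : ℝ → ℝ) :
    (cfc f A * cfc g B).trace = ((∑ i, ∑ j, f (hA.eigenvalues i) * g (hB.eigenvalues j) *
      ‖(star (hA.eigenvectorUnitary : Matrix ι ι 𝕜) *
        (hB.eigenvectorUnitary : Matrix ι ι 𝕜)) i j‖ ^ 2 : ℝ) : 𝕜) := by
  set U := (hA.eigenvectorUnitary : Matrix ι ι 𝕜)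
  set V := (hB.eigenvectorUnitary : Matrix ι ι 𝕜)
  have hcycle : (U * diagonal (RCLike.ofReal ∘ f ∘ hA.eigenvalues) * star U *
      (V * diagonal (RCLike.ofReal ∘ g ∘ hB.eigenvalues) * star V)).trace =
      (diagonal (RCLike.ofReal ∘ f ∘ hA.eigenvalues) * (star U * V) *
        diagonal (RCLike.ofReal ∘ g ∘ hB.eigenvalues) * (star U * V)ᴴ).trace := by
    rw [← star_eq_conjTranspose, star_mul, star_star]
    simp only [mul_assoc]
    conv_lhs => rw [trace_mul_comm]
    simp only [mul_assoc]
  rw [hA.cfc_eq, hB.cfc_eq, IsHermitian.cfc, IsHermitian.cfc, Unitary.conjStarAlgAut_apply,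
    Unitary.conjStarAlgAut_apply, hcycle, trace_diagonal_mul_mul_diagonal_mul_conjTranspose_s16]
  push_cast
  rfl

lemma PosSemidef.re_trace_mul_sub_mul_log_add_self_le {X M : Matrix ι ι 𝕜} (hX : X.PosSemidef)
    (hM : M.IsHermitian) :
    RCLike.re (X * M - X * cfc Real.log X + X).trace ≤ RCLike.re (cfc Real.exp M).trace := by
  have hfin (f : ℝ → ℝ) : ContinuousOn f (spectrum ℝ X) :=
    (finite_real_spectrum (A := X)).continuousOn f
  have hsplit : X * M - X * cfc Real.log X + X =
      cfc (fun x : ℝ => x) X * cfc (fun x : ℝ => x) M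
        - cfc (fun x => x * Real.log x) X * cfc (fun _ : ℝ => (1 : ℝ)) M
        + cfc (fun x : ℝ => x) X * cfc (fun _ : ℝ => (1 : ℝ)) M := by
    rw [cfc_mul (fun x => x) Real.log X (hfin _) (hfin _)]
    simp [cfc_id' ℝ X, cfc_id' ℝ M, cfc_const_one ℝ M]
  have hexp : cfc Real.exp M = cfc (fun _ : ℝ => (1 : ℝ)) X * cfc Real.exp M := by
    simp [cfc_const_one ℝ X]
  rw [hsplit, hexp]
  simp only [trace_add, trace_sub, map_add, map_sub, hX.isHermitian.trace_cfc_mul_cfc hM,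
    RCLike.ofReal_re, ← Finset.sum_sub_distrib, ← Finset.sum_add_distrib]
  gcongr with i _ j _
  have := mul_le_mul_of_nonneg_right
    (Real.mul_sub_mul_log_add_le_exp (hX.eigenvalues_nonneg i) (hM.eigenvalues j))
    (sq_nonneg ‖(star (hX.isHermitian.eigenvectorUnitary : Matrix ι ι 𝕜) *
      (hM.eigenvectorUnitary : Matrix ι ι 𝕜)) i j‖)
  linarith

lemma IsHermitian.posDef_cfc_exp {M : Matrix ι ι 𝕜} (hM : M.IsHermitian) :
    (cfc Real.exp M).PosDef :=
  ((cfc_isStrictlyPositive_iff Real.exp M).mpr fun x _ => Real.exp_pos x).posDef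

lemma IsHermitian.cfc_log_cfc_exp {M : Matrix ι ι 𝕜} (hM : M.IsHermitian) :
    cfc Real.log (cfc Real.exp M) = M := by
  rw [← cfc_comp' Real.log Real.exp M]
  simp [cfc_id' ℝ M]

end Matrix

theorem trace_exp_variational_general {n : ℕ} (H A : Matrix (Fin n) (Fin n) ℂ)
    (hH : H.IsHermitian) :
    IsGreatest
      {r : ℝ | ∃ X : Matrix (Fin n) (Fin n) ℂ, X.PosDef ∧
        r = ((X * H).trace).re
          - ((X * (cfc Real.log X - cfc Real.log A)).trace).re
          + (X.trace).re}
      (((cfc Real.exp (H + cfc Real.log A)).trace).re) := by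
  have hM : (H + cfc Real.log A).IsHermitian := hH.add (cfc_predicate Real.log A)
  have objective_eq (X : Matrix (Fin n) (Fin n) ℂ) :
      ((X * H).trace).re - ((X * (cfc Real.log X - cfc Real.log A)).trace).re + (X.trace).re =
        RCLike.re (X * (H + cfc Real.log A) - X * cfc Real.log X + X).trace := by
    simp only [mul_add, mul_sub, trace_add, trace_sub, RCLike.re_to_complex, Complex.add_re,
      Complex.sub_re]
    ring
  refine ⟨⟨cfc Real.exp (H + cfc Real.log A), hM.posDef_cfc_exp, ?_⟩, ?_⟩
  · rw [objective_eq, hM.cfc_log_cfc_exp, sub_self, zero_add, RCLike.re_to_complex]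
  · rintro _ ⟨X, hX, rfl⟩
    rw [objective_eq]
    exact hX.posSemidef.re_trace_mul_sub_mul_log_add_self_le hM

/-- Variational formula for the trace exponential: for a Hermitian matrix `H` and a
positive definite matrix `A`,
`tr (exp (H + log A)) = max_{X ≻ 0} { tr (X H) - D(X‖A) + tr X }`, where
`D(X‖A) = tr (X (log X - log A))` is the quantum relative entropy.  The maximum is
expressed via `IsGreatest`. -/
theorem trace_exp_variational {n : ℕ} (H A : Matrix (Fin n) (Fin n) ℂ)
    (hH : H.IsHermitian) (hA : A.PosDef) :
    IsGreatest
      {r : ℝ | ∃ X : Matrix (Fin n) (Fin n) ℂ, X.PosDef ∧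
        r = ((X * H).trace).re
          - ((X * (cfc Real.log X - cfc Real.log A)).trace).re
          + (X.trace).re}
      (((cfc Real.exp (H + cfc Real.log A)).trace).re) :=
  trace_exp_variational_general H A hH
end

section
/- Joint convexity of quantum relative entropy (T-product version): the function D(A‖B) = tr(A(log A - log B)) is jointly convex on pairs of positive definite Hermitian matrices: for t ∈ [0,1], D(tA₁+(1-t)A₂ ‖ tB₁+(1-t)B₂) ≤ t·D(A₁‖B₁) + (1-t)·D(A₂‖B₂). -/
/-!
Diagonalize `A = ∑ aᵢ uᵢuᵢᴴ`, `B = ∑ bⱼ vⱼvⱼᴴ` and put `wᵢⱼ = |⟨uᵢ, vⱼ⟩|²`, so that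
`D(A‖B) = ∑ wᵢⱼ (aᵢ log aᵢ - aᵢ log bⱼ)`. The scalar identity
`a log a - a log b = ∫₀^∞ (a/(1+s) - a/s + a²/(s (a + s b))) ds` then gives
`D(A‖B) = ∫₀^∞ (tr A (1/(1+s) - 1/s) + tr (A Yₛ) / s) ds`, where `Yₛ` solves the Sylvester
equation `A Y + s Y B = A`. The first term is linear in `A`, and the second is jointly convex in
`(A, B)` by the variational formula `tr (A Yₛ) = max_Z (2 Re tr (A Z) - Re tr (Zᴴ (A Z + s Z B)))`,
a maximum of functions that are linear in `(A, B)`. Integrating over `s` gives joint convexity.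
-/

open Matrix MeasureTheory Filter Set
open scoped ComplexOrder Topology

namespace RelativeEntropy

section Kernel

noncomputable def entropyKernel (a b s : ℝ) : ℝ := a * (a - b) / ((1 + s) * (a + s * b))

variable {a b : ℝ}

lemma entropyKernel_eq (ha : 0 < a) (hb : 0 < b) {s : ℝ} (hs : 0 < s) :
    entropyKernel a b s = a * (1 / (1 + s) - 1 / s) + a ^ 2 / (a + s * b) / s := by
  have : 0 < a + s * b := by positivity
  unfold entropyKernel
  field_simp
  ring

lemma sum_mul_entropyKernel_eq {ι : Type*} [Fintype ι] {w : ι → ℝ} (hw : ∑ j, w j = 1) (ha : 0 < a)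
    {b : ι → ℝ} (hb : ∀ j, 0 < b j) {s : ℝ} (hs : 0 < s) :
    ∑ j, w j * entropyKernel a (b j) s =
      a * (1 / (1 + s) - 1 / s) + ∑ j, w j * (a ^ 2 / (a + s * b j)) / s := by
  simp only [entropyKernel_eq ha (hb _) hs, mul_add, Finset.sum_add_distrib, ← Finset.sum_mul, hw,
    one_mul, mul_div_assoc]

lemma hasDerivAt_entropyKernel_primitive (ha : 0 < a) (hb : 0 < b) {s : ℝ} (hs : 0 ≤ s) :
    HasDerivAt (fun u ↦ a * Real.log (1 + u) - a * Real.log (a + u * b))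
      (entropyKernel a b s) s := by
  have h₁ : HasDerivAt (fun u ↦ 1 + u) 1 s := (hasDerivAt_id s).const_add 1
  have h₂ : HasDerivAt (fun u ↦ a + u * b) b s := by
    simpa using ((hasDerivAt_id s).mul_const b).const_add a
  refine (((h₁.log (by positivity)).const_mul a).sub
    ((h₂.log (by positivity)).const_mul a)).congr_deriv ?_
  have : 0 < a + s * b := by positivity
  unfold entropyKernel
  field_simp
  ring

lemma tendsto_entropyKernel_primitive (ha : 0 < a) (hb : 0 < b) :
    Tendsto (fun s ↦ a * Real.log (1 + s) - a * Real.log (a + s * b)) atTop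
      (𝓝 (-(a * Real.log b))) := by
  have hratio : Tendsto (fun s : ℝ ↦ (1 + s) / (a + s * b)) atTop (𝓝 b⁻¹) := by
    have h := ((tendsto_inv_atTop_zero (𝕜 := ℝ)).add_const 1).div
      (((tendsto_inv_atTop_zero (𝕜 := ℝ)).const_mul a).add_const b) (by simpa using hb.ne')
    rw [zero_add, mul_zero, zero_add, one_div] at h
    refine h.congr' ?_
    filter_upwards [eventually_gt_atTop 0] with s hs
    simp only [Pi.div_apply]
    field_simp
  have hlog := ((Real.continuousAt_log (inv_pos.2 hb).ne').tendsto.comp hratio).const_mul a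
  rw [Real.log_inv, mul_neg] at hlog
  refine hlog.congr' ?_
  filter_upwards [eventually_gt_atTop 0] with s hs
  rw [Function.comp_apply, Real.log_div (by positivity) (by positivity), mul_sub]

lemma integrableOn_entropyKernel (ha : 0 < a) (hb : 0 < b) :
    IntegrableOn (entropyKernel a b) (Ioi 0) := by
  have hderiv := fun s (hs : s ∈ Ici (0 : ℝ)) ↦ hasDerivAt_entropyKernel_primitive ha hb hs
  have hlim := tendsto_entropyKernel_primitive ha hb
  rcases le_total b a with hba | hab
  · refine integrableOn_Ioi_deriv_of_nonneg' hderiv (fun s (hs : 0 < s) ↦ ?_) hlim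
    exact div_nonneg (mul_nonneg ha.le (by linarith)) (by positivity)
  · refine integrableOn_Ioi_deriv_of_nonpos' hderiv (fun s (hs : 0 < s) ↦ ?_) hlim
    exact div_nonpos_of_nonpos_of_nonneg (mul_nonpos_of_nonneg_of_nonpos ha.le (by linarith))
      (by positivity)

lemma integral_entropyKernel (ha : 0 < a) (hb : 0 < b) :
    ∫ s in Ioi 0, entropyKernel a b s = a * Real.log a - a * Real.log b := by
  rw [integral_Ioi_of_hasDerivAt_of_tendsto'
    (fun s hs ↦ hasDerivAt_entropyKernel_primitive ha hb hs) (integrableOn_entropyKernel ha hb)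
    (tendsto_entropyKernel_primitive ha hb)]
  simp only [add_zero, zero_mul, Real.log_one, mul_zero]
  ring

end Kernel

section Sylvester

variable {n : Type*} [Fintype n] {A B : Matrix n n ℂ} {s : ℝ}

noncomputable def sylvesterForm (A B : Matrix n n ℂ) (s : ℝ) (X W : Matrix n n ℂ) : ℝ :=
  (Xᴴ * (A * W + s • (W * B))).trace.re

lemma sylvesterForm_comm (hA : A.IsHermitian) (hB : B.IsHermitian) (X W : Matrix n n ℂ) :
    sylvesterForm A B s X W = sylvesterForm A B s W X := by
  rw [sylvesterForm, ← Complex.conj_re, ← Complex.star_def, ← trace_conjTranspose]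
  simp only [sylvesterForm, conjTranspose_mul, conjTranspose_add, conjTranspose_smul,
    conjTranspose_conjTranspose, hA.eq, hB.eq, star_trivial, mul_add, trace_add, mul_smul_comm,
    trace_smul, Matrix.mul_assoc]
  rw [trace_mul_comm B, Matrix.mul_assoc]

lemma sylvesterForm_sub_left (X Y W : Matrix n n ℂ) :
    sylvesterForm A B s (X - Y) W = sylvesterForm A B s X W - sylvesterForm A B s Y W := by
  simp only [sylvesterForm, conjTranspose_sub, sub_mul, trace_sub, Complex.sub_re]

lemma sylvesterForm_sub_right (X W V : Matrix n n ℂ) :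
    sylvesterForm A B s X (W - V) = sylvesterForm A B s X W - sylvesterForm A B s X V := by
  simp only [sylvesterForm, mul_sub, sub_mul, smul_sub, mul_add, trace_add, trace_sub,
    Complex.add_re, Complex.sub_re]
  ring

lemma sylvesterForm_self_nonneg (hA : A.PosSemidef) (hB : B.PosSemidef) (hs : 0 ≤ s)
    (X : Matrix n n ℂ) : 0 ≤ sylvesterForm A B s X X := by
  have h₁ : 0 ≤ (Xᴴ * A * X).trace := (hA.conjTranspose_mul_mul_same X).trace_nonneg
  have h₂ : 0 ≤ (X * B * Xᴴ).trace := (hB.mul_mul_conjTranspose_same X).trace_nonneg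
  rw [trace_mul_cycle] at h₂
  simp only [sylvesterForm, mul_add, mul_smul_comm, trace_add, trace_smul, Complex.add_re,
    Complex.real_smul, Complex.re_ofReal_mul, ← Matrix.mul_assoc]
  exact add_nonneg (Complex.nonneg_iff.1 h₁).1 (mul_nonneg hs (Complex.nonneg_iff.1 h₂).1)

lemma sylvesterForm_of_sylvester_eq (hA : A.IsHermitian) {Y : Matrix n n ℂ}
    (hY : A * Y + s • (Y * B) = A) (X : Matrix n n ℂ) :
    sylvesterForm A B s X Y = (A * X).trace.re := by
  rw [sylvesterForm, hY, ← Complex.conj_re, ← Complex.star_def, ← trace_conjTranspose,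
    conjTranspose_mul, conjTranspose_conjTranspose, hA.eq]

noncomputable def sylvesterDual (A B : Matrix n n ℂ) (s : ℝ) (Z : Matrix n n ℂ) : ℝ :=
  2 * (A * Z).trace.re - sylvesterForm A B s Z Z

lemma sylvesterDual_of_sylvester_eq (hA : A.IsHermitian) {Y : Matrix n n ℂ}
    (hY : A * Y + s • (Y * B) = A) : sylvesterDual A B s Y = (A * Y).trace.re := by
  rw [sylvesterDual, sylvesterForm_of_sylvester_eq hA hY]
  ring

lemma sylvesterDual_le (hA : A.PosSemidef) (hB : B.PosSemidef) (hs : 0 ≤ s) {Y : Matrix n n ℂ}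
    (hY : A * Y + s • (Y * B) = A) (Z : Matrix n n ℂ) :
    sylvesterDual A B s Z ≤ (A * Y).trace.re := by
  have hsq := sylvesterForm_self_nonneg hA hB hs (Z - Y)
  rw [sylvesterForm_sub_left, sylvesterForm_sub_right, sylvesterForm_sub_right,
    sylvesterForm_comm hA.isHermitian hB.isHermitian Y Z,
    sylvesterForm_of_sylvester_eq hA.isHermitian hY,
    sylvesterForm_of_sylvester_eq hA.isHermitian hY] at hsq
  rw [sylvesterDual]
  linarith

lemma sylvesterDual_add (A₁ A₂ B₁ B₂ : Matrix n n ℂ) (c d : ℝ) (Z : Matrix n n ℂ) :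
    sylvesterDual (c • A₁ + d • A₂) (c • B₁ + d • B₂) s Z =
      c * sylvesterDual A₁ B₁ s Z + d * sylvesterDual A₂ B₂ s Z := by
  simp only [sylvesterDual, sylvesterForm, add_mul, mul_add, Matrix.mul_smul, smul_mul_assoc,
    smul_add, trace_add, trace_smul, Complex.add_re, Complex.real_smul, Complex.re_ofReal_mul]
  ring

lemma re_trace_mul_sylvester_solution_convex {A₁ A₂ B₁ B₂ Y Y₁ Y₂ : Matrix n n ℂ}
    (hA₁ : A₁.PosSemidef) (hA₂ : A₂.PosSemidef) (hB₁ : B₁.PosSemidef) (hB₂ : B₂.PosSemidef)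
    {t : ℝ} (ht₀ : 0 ≤ t) (ht₁ : t ≤ 1) (hs : 0 ≤ s)
    (hY : (t • A₁ + (1 - t) • A₂) * Y + s • (Y * (t • B₁ + (1 - t) • B₂)) = t • A₁ + (1 - t) • A₂)
    (hY₁ : A₁ * Y₁ + s • (Y₁ * B₁) = A₁) (hY₂ : A₂ * Y₂ + s • (Y₂ * B₂) = A₂) :
    ((t • A₁ + (1 - t) • A₂) * Y).trace.re ≤
      t * (A₁ * Y₁).trace.re + (1 - t) * (A₂ * Y₂).trace.re := by
  have hA : (t • A₁ + (1 - t) • A₂).IsHermitian :=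
    ((hA₁.smul ht₀).add (hA₂.smul (sub_nonneg.2 ht₁))).isHermitian
  calc ((t • A₁ + (1 - t) • A₂) * Y).trace.re
      = sylvesterDual (t • A₁ + (1 - t) • A₂) (t • B₁ + (1 - t) • B₂) s Y :=
        (sylvesterDual_of_sylvester_eq hA hY).symm
    _ = t * sylvesterDual A₁ B₁ s Y + (1 - t) * sylvesterDual A₂ B₂ s Y := sylvesterDual_add ..
    _ ≤ t * (A₁ * Y₁).trace.re + (1 - t) * (A₂ * Y₂).trace.re := by
        have := sylvesterDual_le hA₁ hB₁ hs hY₁ Y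
        have := sylvesterDual_le hA₂ hB₂ hs hY₂ Y
        gcongr

end Sylvester

lemma re_ofReal_mul_mul_star (x : ℝ) (z : ℂ) : ((x : ℂ) * z * star z).re =
    Complex.normSq z * x := by
  rw [mul_assoc, Complex.star_def, Complex.mul_conj, ← Complex.ofReal_mul, Complex.ofReal_re,
    mul_comm]

section Spectral

variable {n : Type*} [Fintype n] [DecidableEq n] {A B : Matrix n n ℂ}
  (hA : A.IsHermitian) (hB : B.IsHermitian)

lemma star_eigenvectorUnitary_mul_self :
    star (hA.eigenvectorUnitary : Matrix n n ℂ) * hA.eigenvectorUnitary = 1 :=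
  Unitary.star_mul_self_of_mem hA.eigenvectorUnitary.prop

lemma eq_eigenvectorUnitary_mul_diagonal_mul_star :
    A = hA.eigenvectorUnitary * diagonal (Complex.ofReal ∘ hA.eigenvalues) *
      star (hA.eigenvectorUnitary : Matrix n n ℂ) := by
  conv_lhs => rw [hA.spectral_theorem]
  rfl

noncomputable def overlap : Matrix n n ℂ :=
  star (hA.eigenvectorUnitary : Matrix n n ℂ) * hB.eigenvectorUnitary

noncomputable def transitionWeight (i j : n) : ℝ := Complex.normSq (overlap hA hB i j)

lemma sum_transitionWeight (i : n) : ∑ j, transitionWeight hA hB i j = 1 := by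
  have hC : overlap hA hB * star (overlap hA hB) = 1 := by
    simp only [overlap, star_mul, star_star, Matrix.mul_assoc]
    rw [← Matrix.mul_assoc (hB.eigenvectorUnitary : Matrix n n ℂ),
      Unitary.mul_star_self_of_mem hB.eigenvectorUnitary.prop, Matrix.one_mul,
      star_eigenvectorUnitary_mul_self]
  have := congrArg (fun M ↦ (M i i).re) hC
  simpa [Matrix.mul_apply, Complex.mul_conj, transitionWeight] using this

lemma transitionWeight_self (i j : n) : transitionWeight hA hA i j = if i = j then 1 else 0 := by
  simp [transitionWeight, overlap, Matrix.one_apply, apply_ite Complex.normSq]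

lemma mul_conj_eigenvectorUnitary (M : Matrix n n ℂ) :
    A * (hA.eigenvectorUnitary * M * star (hB.eigenvectorUnitary : Matrix n n ℂ)) =
      hA.eigenvectorUnitary * (diagonal (Complex.ofReal ∘ hA.eigenvalues) * M) *
        star (hB.eigenvectorUnitary : Matrix n n ℂ) := by
  conv_lhs => arg 1; rw [eq_eigenvectorUnitary_mul_diagonal_mul_star hA]
  simp only [Matrix.mul_assoc]
  rw [← Matrix.mul_assoc (star _), star_eigenvectorUnitary_mul_self, Matrix.one_mul]

lemma conj_eigenvectorUnitary_mul (M : Matrix n n ℂ) :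
    hA.eigenvectorUnitary * M * star (hB.eigenvectorUnitary : Matrix n n ℂ) * B =
      hA.eigenvectorUnitary * (M * diagonal (Complex.ofReal ∘ hB.eigenvalues)) *
        star (hB.eigenvectorUnitary : Matrix n n ℂ) := by
  conv_lhs => arg 2; rw [eq_eigenvectorUnitary_mul_diagonal_mul_star hB]
  simp only [Matrix.mul_assoc]
  rw [← Matrix.mul_assoc (star _), star_eigenvectorUnitary_mul_self, Matrix.one_mul]

lemma eq_conj_eigenvectorUnitary_overlap :
    A = hA.eigenvectorUnitary * (diagonal (Complex.ofReal ∘ hA.eigenvalues) * overlap hA hB) *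
      star (hB.eigenvectorUnitary : Matrix n n ℂ) := by
  conv_lhs => rw [eq_eigenvectorUnitary_mul_diagonal_mul_star hA]
  simp only [overlap, Matrix.mul_assoc]
  rw [Unitary.mul_star_self_of_mem hB.eigenvectorUnitary.prop, Matrix.mul_one]

lemma cfc_eq_conj_eigenvectorUnitary (f : ℝ → ℝ) :
    cfc f B = hA.eigenvectorUnitary *
      (overlap hA hB * diagonal (Complex.ofReal ∘ f ∘ hB.eigenvalues)) *
        star (hB.eigenvectorUnitary : Matrix n n ℂ) := by
  rw [hB.cfc_eq, IsHermitian.cfc, Unitary.conjStarAlgAut_apply, overlap]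
  simp only [← Matrix.mul_assoc]
  rw [Unitary.mul_star_self_of_mem hA.eigenvectorUnitary.prop, Matrix.one_mul]
  rfl

lemma trace_mul_conj_eigenvectorUnitary (M : Matrix n n ℂ) :
    (A * (hA.eigenvectorUnitary * M * star (hB.eigenvectorUnitary : Matrix n n ℂ))).trace =
      ∑ i, ∑ j, (hA.eigenvalues i : ℂ) * M i j * star (overlap hA hB i j) := by
  have hC : star (hB.eigenvectorUnitary : Matrix n n ℂ) * hA.eigenvectorUnitary =
      star (overlap hA hB) := by
    simp [overlap, star_mul]
  rw [mul_conj_eigenvectorUnitary, Matrix.mul_assoc, trace_mul_comm, Matrix.mul_assoc, hC]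
  simp [trace, Matrix.mul_apply, Matrix.diagonal_apply]

lemma re_trace_mul_cfc (f : ℝ → ℝ) :
    (A * cfc f B).trace.re =
      ∑ i, ∑ j, transitionWeight hA hB i j * (hA.eigenvalues i * f (hB.eigenvalues j)) := by
  rw [cfc_eq_conj_eigenvectorUnitary hA hB, trace_mul_conj_eigenvectorUnitary, Complex.re_sum]
  refine Finset.sum_congr rfl fun i _ ↦ ?_
  rw [Complex.re_sum]
  refine Finset.sum_congr rfl fun j _ ↦ ?_
  rw [Matrix.mul_diagonal, Function.comp_apply, Function.comp_apply, transitionWeight,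
    ← re_ofReal_mul_mul_star]
  push_cast
  ring_nf

lemma exists_sylvester_solution (hA : A.PosDef) (hB : B.PosDef) {s : ℝ} (hs : 0 ≤ s) :
    ∃ Y, A * Y + s • (Y * B) = A ∧ (A * Y).trace.re =
      ∑ i, ∑ j, transitionWeight hA.isHermitian hB.isHermitian i j *
        (hA.isHermitian.eigenvalues i ^ 2 /
          (hA.isHermitian.eigenvalues i + s * hB.isHermitian.eigenvalues j)) := by
  set a := hA.isHermitian.eigenvalues
  set b := hB.isHermitian.eigenvalues
  set C := overlap hA.isHermitian hB.isHermitian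
  have hab : ∀ i j, 0 < a i + s * b j := fun i j ↦ by
    have := hA.eigenvalues_pos i
    have := hB.eigenvalues_pos j
    positivity
  -- In the eigenbases the Sylvester equation reads `(aᵢ + s bⱼ) Dᵢⱼ = aᵢ Cᵢⱼ` entrywise.
  set D : Matrix n n ℂ := Matrix.of fun i j ↦ ((a i / (a i + s * b j) : ℝ) : ℂ) * C i j
  refine ⟨hA.isHermitian.eigenvectorUnitary * D * star (hB.isHermitian.eigenvectorUnitary :
    Matrix n n ℂ), ?_, ?_⟩
  · have hD : diagonal (Complex.ofReal ∘ a) * D + s • (D * diagonal (Complex.ofReal ∘ b)) =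
        diagonal (Complex.ofReal ∘ a) * C := by
      ext i j
      have : (a i : ℂ) + s * b j ≠ 0 := by exact_mod_cast (hab i j).ne'
      simp only [Matrix.add_apply, Matrix.smul_apply, diagonal_mul, mul_diagonal, D, of_apply,
        Function.comp_apply, Complex.real_smul]
      push_cast
      field_simp
    rw [mul_conj_eigenvectorUnitary, conj_eigenvectorUnitary_mul, ← smul_mul_assoc,
      ← mul_smul_comm, ← add_mul, ← mul_add, hD]
    exact (eq_conj_eigenvectorUnitary_overlap hA.isHermitian hB.isHermitian).symm
  · rw [trace_mul_conj_eigenvectorUnitary, Complex.re_sum]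
    refine Finset.sum_congr rfl fun i _ ↦ ?_
    rw [Complex.re_sum]
    refine Finset.sum_congr rfl fun j _ ↦ ?_
    simp only [D, of_apply]
    rw [← mul_assoc, ← Complex.ofReal_mul, re_ofReal_mul_mul_star, transitionWeight]
    congr 1
    ring

end Spectral

lemma posDef_smul_add_one_sub_smul {n : Type*} [Fintype n] {A₁ A₂ : Matrix n n ℂ}
    (hA₁ : A₁.PosDef) (hA₂ : A₂.PosDef) {t : ℝ} (ht₀ : 0 ≤ t) (ht₁ : t ≤ 1) :
    (t • A₁ + (1 - t) • A₂).PosDef := by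
  rcases ht₁.eq_or_lt with rfl | ht₁
  · simpa using hA₁
  · exact PosDef.posSemidef_add (hA₁.posSemidef.smul ht₀) (hA₂.smul (sub_pos.2 ht₁))

section Integral

variable {n : Type*} [Fintype n] [DecidableEq n] {A B : Matrix n n ℂ}

lemma re_trace_mul_log_sub_log (hA : A.IsHermitian) (hB : B.IsHermitian) :
    (A * (cfc Real.log A - cfc Real.log B)).trace.re =
      ∑ i, ∑ j, transitionWeight hA hB i j * (hA.eigenvalues i * Real.log (hA.eigenvalues i) -
        hA.eigenvalues i * Real.log (hB.eigenvalues j)) := by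
  rw [mul_sub, trace_sub, Complex.sub_re, re_trace_mul_cfc hA hA, re_trace_mul_cfc hA hB]
  simp only [transitionWeight_self, ite_mul, one_mul, zero_mul, Finset.sum_ite_eq,
    Finset.mem_univ, if_true]
  rw [← Finset.sum_sub_distrib]
  refine Finset.sum_congr rfl fun i _ ↦ ?_
  simp only [mul_sub, Finset.sum_sub_distrib, ← Finset.sum_mul, sum_transitionWeight, one_mul]

noncomputable def entropyIntegrand (hA : A.IsHermitian) (hB : B.IsHermitian) (s : ℝ) : ℝ :=
  ∑ i, ∑ j, transitionWeight hA hB i j * entropyKernel (hA.eigenvalues i) (hB.eigenvalues j) s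

lemma integrableOn_entropyIntegrand (hA : A.PosDef) (hB : B.PosDef) :
    IntegrableOn (entropyIntegrand hA.isHermitian hB.isHermitian) (Ioi 0) :=
  integrable_finsetSum _ fun i _ ↦ integrable_finsetSum _ fun j _ ↦
    (integrableOn_entropyKernel (hA.eigenvalues_pos i) (hB.eigenvalues_pos j)).const_mul _

lemma re_trace_mul_log_sub_log_eq_integral (hA : A.PosDef) (hB : B.PosDef) :
    (A * (cfc Real.log A - cfc Real.log B)).trace.re =
      ∫ s in Ioi 0, entropyIntegrand hA.isHermitian hB.isHermitian s := by
  have hint := fun i j ↦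
    (integrableOn_entropyKernel (hA.eigenvalues_pos i) (hB.eigenvalues_pos j)).const_mul
      (transitionWeight hA.isHermitian hB.isHermitian i j)
  rw [re_trace_mul_log_sub_log hA.isHermitian hB.isHermitian]
  simp only [entropyIntegrand]
  rw [integral_finsetSum _ fun i _ ↦ integrable_finsetSum _ fun j _ ↦ hint i j]
  refine Finset.sum_congr rfl fun i _ ↦ ?_
  rw [integral_finsetSum _ fun j _ ↦ hint i j]
  refine Finset.sum_congr rfl fun j _ ↦ ?_
  rw [integral_const_mul, integral_entropyKernel (hA.eigenvalues_pos i) (hB.eigenvalues_pos j)]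

lemma exists_entropyIntegrand_eq (hA : A.PosDef) (hB : B.PosDef) {s : ℝ} (hs : 0 < s) :
    ∃ Y, A * Y + s • (Y * B) = A ∧ entropyIntegrand hA.isHermitian hB.isHermitian s =
      A.trace.re * (1 / (1 + s) - 1 / s) + (A * Y).trace.re / s := by
  obtain ⟨Y, hY, htr⟩ := exists_sylvester_solution hA hB hs.le
  refine ⟨Y, hY, ?_⟩
  simp only [htr, hA.isHermitian.trace_eq_sum_eigenvalues, Complex.coe_algebraMap,
    Complex.re_sum, Complex.ofReal_re, Finset.sum_mul, Finset.sum_div, ← Finset.sum_add_distrib,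
    entropyIntegrand]
  exact Finset.sum_congr rfl fun i _ ↦ sum_mul_entropyKernel_eq (sum_transitionWeight _ _ i)
    (hA.eigenvalues_pos i) hB.eigenvalues_pos hs

lemma entropyIntegrand_convex {A₁ A₂ B₁ B₂ : Matrix n n ℂ}
    (hA₁ : A₁.PosDef) (hA₂ : A₂.PosDef) (hB₁ : B₁.PosDef) (hB₂ : B₂.PosDef) {t : ℝ}
    (hA : (t • A₁ + (1 - t) • A₂).PosDef) (hB : (t • B₁ + (1 - t) • B₂).PosDef)
    (ht₀ : 0 ≤ t) (ht₁ : t ≤ 1) {s : ℝ} (hs : 0 < s) :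
    entropyIntegrand hA.isHermitian hB.isHermitian s ≤
      t * entropyIntegrand hA₁.isHermitian hB₁.isHermitian s +
        (1 - t) * entropyIntegrand hA₂.isHermitian hB₂.isHermitian s := by
  obtain ⟨Y, hY, hΦ⟩ := exists_entropyIntegrand_eq hA hB hs
  obtain ⟨Y₁, hY₁, hΦ₁⟩ := exists_entropyIntegrand_eq hA₁ hB₁ hs
  obtain ⟨Y₂, hY₂, hΦ₂⟩ := exists_entropyIntegrand_eq hA₂ hB₂ hs
  have hconv := div_le_div_of_nonneg_right (re_trace_mul_sylvester_solution_convex hA₁.posSemidef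
    hA₂.posSemidef hB₁.posSemidef hB₂.posSemidef ht₀ ht₁ hs.le hY hY₁ hY₂) hs.le
  have htrace : (t • A₁ + (1 - t) • A₂).trace.re = t * A₁.trace.re + (1 - t) * A₂.trace.re := by
    simp
  rw [hΦ, hΦ₁, hΦ₂, htrace]
  rw [add_div, mul_div_assoc, mul_div_assoc] at hconv
  linarith

end Integral

end RelativeEntropy

open RelativeEntropy

/-- Joint convexity of the quantum relative entropy
`D(A‖B) = tr (A * (log A - log B))` on pairs of positive definite Hermitian
matrices: for `t ∈ [0, 1]`,
`D(tA₁+(1-t)A₂ ‖ tB₁+(1-t)B₂) ≤ t D(A₁‖B₁) + (1-t) D(A₂‖B₂)`. -/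
theorem relativeEntropy_jointly_convex {n : ℕ}
    (A₁ A₂ B₁ B₂ : Matrix (Fin n) (Fin n) ℂ)
    (hA₁ : A₁.PosDef) (hA₂ : A₂.PosDef) (hB₁ : B₁.PosDef) (hB₂ : B₂.PosDef)
    (t : ℝ) (ht : t ∈ Set.Icc (0:ℝ) 1) :
    (((t • A₁ + (1 - t) • A₂) *
        (cfc Real.log (t • A₁ + (1 - t) • A₂) -
          cfc Real.log (t • B₁ + (1 - t) • B₂))).trace).re ≤
      t * ((A₁ * (cfc Real.log A₁ - cfc Real.log B₁)).trace).re +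
      (1 - t) * ((A₂ * (cfc Real.log A₂ - cfc Real.log B₂)).trace).re := by
  obtain ⟨ht₀, ht₁⟩ := ht
  have hA := posDef_smul_add_one_sub_smul hA₁ hA₂ ht₀ ht₁
  have hB := posDef_smul_add_one_sub_smul hB₁ hB₂ ht₀ ht₁
  have hint₁ := (integrableOn_entropyIntegrand hA₁ hB₁).const_mul t
  have hint₂ := (integrableOn_entropyIntegrand hA₂ hB₂).const_mul (1 - t)
  rw [re_trace_mul_log_sub_log_eq_integral hA hB, re_trace_mul_log_sub_log_eq_integral hA₁ hB₁,
    re_trace_mul_log_sub_log_eq_integral hA₂ hB₂, ← integral_const_mul, ← integral_const_mul,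
    ← integral_add hint₁ hint₂]
  exact setIntegral_mono_on (integrableOn_entropyIntegrand hA hB) (hint₁.add hint₂)
    measurableSet_Ioi fun s hs ↦ entropyIntegrand_convex hA₁ hA₂ hB₁ hB₂ hA hB ht₀ ht₁ hs
end
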